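/- arXiv:1904.04527 — 3 statements merged into one kernel-verified Lean document; each statement's English description precedes it below -/
import Mathlib

section
/- Let A(X) be an acceptable subspace of C_b(X). Then: (i) there exists h ∈ A(X) with h(x) > 0 for every x ∈ X; (ii) for every lower semicontinuous function u : X → [0,∞) there exists a sequence (g_k) of nonnegative elements of A(X) increasing pointwise to u. -/
open MeasureTheory Filter Topology BoundedContinuousFunction ENNReal NNReal

noncomputable section

namespace AMPaper

variable (X : Type*) [TopologicalSpace X] [MeasurableSpace X]

/-- The topology `τ_b` on the space of finite nonnegative Borel measures:
the weak topology induced by the pairings `μ ↦ ∫ g dμ`, `g ∈ C_b(X)`. -/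
def taub : TopologicalSpace (FiniteMeasure X) :=
  ⨅ g : X →ᵇ ℝ,
    TopologicalSpace.induced (fun μ : FiniteMeasure X => ∫ x, g x ∂(μ : Measure X)) inferInstance

/-- The topology `τ_A` induced by the pairings with functions from `A ⊆ C_b(X)`. -/
def tauA (A : Set (X →ᵇ ℝ)) : TopologicalSpace (FiniteMeasure X) :=
  ⨅ g ∈ A,
    TopologicalSpace.induced (fun μ : FiniteMeasure X => ∫ x, g x ∂(μ : Measure X)) inferInstance

variable {X}

/-- A closed linear sublattice of `C_b(X)`. -/
structure IsClosedSublattice (A : Set (X →ᵇ ℝ)) : Prop where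
  isClosed : IsClosed A
  zero_mem : (0 : X →ᵇ ℝ) ∈ A
  add_mem : ∀ ⦃f g : X →ᵇ ℝ⦄, f ∈ A → g ∈ A → f + g ∈ A
  smul_mem : ∀ (c : ℝ) ⦃f : X →ᵇ ℝ⦄, f ∈ A → c • f ∈ A
  sup_mem : ∀ ⦃f g h : X →ᵇ ℝ⦄, f ∈ A → g ∈ A → (∀ x, h x = max (f x) (g x)) → h ∈ A
  inf_mem : ∀ ⦃f g h : X →ᵇ ℝ⦄, f ∈ A → g ∈ A → (∀ x, h x = min (f x) (g x)) → h ∈ A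

/-- An acceptable subspace of `C_b(X)`: a closed linear sublattice satisfying
the separation property (A2). -/
structure IsAcceptable (A : Set (X →ᵇ ℝ)) extends IsClosedSublattice A : Prop where
  sep : ∀ F : Set X, IsClosed F → ∀ x ∉ F, ∃ g ∈ A,
    (∀ y, 0 ≤ g y) ∧ (∀ y, g y ≤ 1) ∧ g x = 1 ∧ ∀ y ∈ F, g y = 0

/-- A lower semicontinuous `ρ : X → [0,∞]` is admissible for `E` if `∫ ρ dμ ≥ 1` for all `μ ∈ E`. -/
def AdmissibleFun (ρ : X → ℝ≥0∞) (E : Set (FiniteMeasure X)) : Prop :=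
  LowerSemicontinuous ρ ∧ ∀ μ ∈ E, 1 ≤ ∫⁻ x, ρ x ∂(μ : Measure X)

/-- The `M_p` modulus of a family of measures. -/
def Mmod (p : ℝ) (m : Measure X) (E : Set (FiniteMeasure X)) : ℝ≥0∞ :=
  ⨅ (ρ : X → ℝ≥0∞) (_ : AdmissibleFun ρ E), ∫⁻ x, ρ x ^ p ∂m

/-- The continuous modulus `M_{p,c}^A`, with test functions nonnegative elements of `A`. -/
def McMod (p : ℝ) (A : Set (X →ᵇ ℝ)) (m : Measure X) (E : Set (FiniteMeasure X)) : ℝ≥0∞ :=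
  ⨅ (g : X →ᵇ ℝ) (_ : g ∈ A ∧ (∀ x, 0 ≤ g x) ∧
      ∀ μ ∈ E, 1 ≤ ∫⁻ x, ENNReal.ofReal (g x) ∂(μ : Measure X)),
    ∫⁻ x, ENNReal.ofReal (g x) ^ p ∂m

/-- A sequence of lower semicontinuous functions `ρ_j : X → [0,∞]` is an admissible sequence
for `E` if `liminf_j ∫ ρ_j dμ ≥ 1` for all `μ ∈ E`. -/
def AdmissibleSeq (ρ : ℕ → X → ℝ≥0∞) (E : Set (FiniteMeasure X)) : Prop :=
  (∀ j, LowerSemicontinuous (ρ j)) ∧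
    ∀ μ ∈ E, 1 ≤ Filter.liminf (fun j => ∫⁻ x, ρ j x ∂(μ : Measure X)) Filter.atTop

/-- The approximation modulus `AM_p` of a family of measures. -/
def AMmod (p : ℝ) (m : Measure X) (E : Set (FiniteMeasure X)) : ℝ≥0∞ :=
  ⨅ (ρ : ℕ → X → ℝ≥0∞) (_ : AdmissibleSeq ρ E),
    Filter.liminf (fun j => ∫⁻ x, ρ j x ^ p ∂m) Filter.atTop

/-- The continuous approximation modulus `AM_{p,c}^A`. -/
def AMcMod (p : ℝ) (A : Set (X →ᵇ ℝ)) (m : Measure X) (E : Set (FiniteMeasure X)) : ℝ≥0∞ :=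
  ⨅ (g : ℕ → X →ᵇ ℝ) (_ : (∀ j, g j ∈ A ∧ ∀ x, 0 ≤ g j x) ∧
      ∀ μ ∈ E, 1 ≤ Filter.liminf
        (fun j => ∫⁻ x, ENNReal.ofReal (g j x) ∂(μ : Measure X)) Filter.atTop),
    Filter.liminf (fun j => ∫⁻ x, ENNReal.ofReal (g j x) ^ p ∂m) Filter.atTop

/-- The `L^q(m)`-norm of a function `f : X → [0,∞]`. -/
def lqNorm (q : ℝ≥0∞) (m : Measure X) (f : X → ℝ≥0∞) : ℝ≥0∞ :=
  if q = ∞ then essSup f m else (∫⁻ x, f x ^ q.toReal ∂m) ^ (1 / q.toReal)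

variable (X) in
/-- The `p`-content (depending on `p` only through the conjugate exponent `q`):
the supremum of the outer measures `η*(E)` over all plans `η` — finite Borel measures on
`(M^+(X), τ_b)` — whose barycenter `η^#` is absolutely continuous w.r.t. `m` with density
of `L^q(m)`-norm at most `1`. -/
def Ct (q : ℝ≥0∞) (m : Measure X) (E : Set (FiniteMeasure X)) : ℝ≥0∞ :=
  ⨆ (η : @Measure (FiniteMeasure X) (@borel (FiniteMeasure X) (taub X)))
    (_ : η Set.univ < ∞ ∧ ∃ f : X → ℝ≥0∞, Measurable f ∧
      (∀ B : Set X, MeasurableSet B → (∫⁻ μ, (μ : Measure X) B ∂η) = ∫⁻ x in B, f x ∂m) ∧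
      lqNorm q m f ≤ 1),
    η E

/-! For `c < u x`, separating `x` from the closed set `{u ≤ q}`, where `c < q < u x`, yields
`q • g ∈ A` with `0 ≤ q • g ≤ u` and `(q • g) x = q > c`. Hence `u` is the pointwise supremum of
the elements of `A` lying between `0` and `u`; as `X` is hereditarily Lindelöf, countably many of
them already have supremum `u`, and their running maxima increase to `u`. For `u = 1`, the series
`∑ 2⁻ⁿ fₙ` over that countable family converges in `A` to an everywhere positive function. -/

theorem exists_countable_forall_lt_of_lowerSemicontinuous {X ι : Type*} [TopologicalSpace X]
    [HereditarilyLindelofSpace X] {F : ι → X → ℝ} (hF : ∀ i, LowerSemicontinuous (F i)) :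
    ∃ T : Set ι, T.Countable ∧ ∀ x c, (∃ i, c < F i x) → ∃ i ∈ T, c < F i x := by
  choose T hTc hTU using fun q : ℚ =>
    eq_open_union_countable (fun i => {x | (q : ℝ) < F i x}) fun i => (hF i).isOpen_preimage q
  refine ⟨⋃ q, T q, Set.countable_iUnion hTc, ?_⟩
  rintro x c ⟨i, hi⟩
  obtain ⟨q, hcq, hqi⟩ := exists_rat_btwn hi
  have hx : x ∈ ⋃ j ∈ T q, {x | (q : ℝ) < F j x} := (hTU q).symm ▸ Set.mem_iUnion.2 ⟨i, hqi⟩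
  obtain ⟨j, hj, hqj⟩ := Set.mem_iUnion₂.1 hx
  exact ⟨j, Set.mem_iUnion.2 ⟨q, hj⟩, hcq.trans hqj⟩

theorem coe_partialSups {X : Type*} [TopologicalSpace X] (f : ℕ → X →ᵇ ℝ) (k : ℕ) :
    ⇑(partialSups f k) = partialSups (fun n => ⇑(f n)) k := by
  induction k with
  | zero => simp only [partialSups_zero]
  | succ k ih => simp only [partialSups_add_one, coe_sup, ih]

theorem tendsto_partialSups_of_forall_lt {α : Type*} [LinearOrder α] [TopologicalSpace α]
    [OrderTopology α] {a : ℕ → α} {L : α} (ha : ∀ n, a n ≤ L) (hL : ∀ c < L, ∃ n, c < a n) :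
    Tendsto (partialSups a) atTop (𝓝 L) := by
  refine tendsto_atTop_isLUB (partialSups_monotone a) ⟨?_, fun b hb => ?_⟩
  · rintro _ ⟨k, rfl⟩
    exact partialSups_le a k L fun n _ => ha n
  · refine le_of_forall_lt fun c hc => ?_
    obtain ⟨n, hn⟩ := hL c hc
    exact hn.trans_le ((le_partialSups a n).trans (hb ⟨n, rfl⟩))

namespace IsClosedSublattice

variable {X : Type*} [TopologicalSpace X] {A : Set (X →ᵇ ℝ)}

def toSubmodule (hA : IsClosedSublattice A) : Submodule ℝ (X →ᵇ ℝ) where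
  carrier := A
  add_mem' := fun hf hg => hA.add_mem hf hg
  zero_mem' := hA.zero_mem
  smul_mem' := hA.smul_mem

theorem tsum_mem (hA : IsClosedSublattice A) {f : ℕ → X →ᵇ ℝ} (hf : ∀ n, f n ∈ A) :
    ∑' n, f n ∈ A :=
  _root_.tsum_mem (s := hA.toSubmodule) hA.isClosed hf

theorem partialSups_mem (hA : IsClosedSublattice A) {f : ℕ → X →ᵇ ℝ} (hf : ∀ n, f n ∈ A)
    (k : ℕ) : partialSups f k ∈ A := by
  rw [partialSups_apply]
  exact Finset.sup'_induction _ _ (fun _ ha _ hb => hA.sup_mem ha hb fun _ => rfl) fun n _ => hf n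

end IsClosedSublattice

namespace IsAcceptable

variable {X : Type*} [TopologicalSpace X] {A : Set (X →ᵇ ℝ)}

theorem exists_mem_le_lt_apply (hA : IsAcceptable A) {u : X → ℝ} (hu : LowerSemicontinuous u)
    (hu0 : ∀ x, 0 ≤ u x) {x : X} {c : ℝ} (hc : c < u x) :
    ∃ f ∈ A, (∀ y, 0 ≤ f y) ∧ (∀ y, f y ≤ u y) ∧ c < f x := by
  by_cases hc0 : c < 0
  · exact ⟨0, hA.zero_mem, fun _ => le_rfl, hu0, hc0⟩
  obtain ⟨q, hcq, hqu⟩ := exists_between hc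
  have hq : 0 < q := (not_lt.1 hc0).trans_lt hcq
  obtain ⟨g, hgA, hg0, hg1, hgx, hgU⟩ := hA.sep {y | q < u y}ᶜ
    (hu.isOpen_preimage q).isClosed_compl x (by simpa using hqu)
  refine ⟨q • g, hA.smul_mem q hgA, fun y => ?_, fun y => ?_, ?_⟩
  · simpa using mul_nonneg hq.le (hg0 y)
  · by_cases hy : q < u y
    · simpa using (mul_le_of_le_one_right hq.le (hg1 y)).trans hy.le
    · simpa [hgU y hy] using hu0 y
  · simpa [hgx] using hcq

theorem exists_seq_le_forall_lt [HereditarilyLindelofSpace X] (hA : IsAcceptable A)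
    {u : X → ℝ} (hu : LowerSemicontinuous u) (hu0 : ∀ x, 0 ≤ u x) :
    ∃ f : ℕ → X →ᵇ ℝ, (∀ n, f n ∈ A) ∧ (∀ n y, 0 ≤ f n y) ∧ (∀ n y, f n y ≤ u y) ∧
      ∀ x c, c < u x → ∃ n, c < f n x := by
  let ι := {f : X →ᵇ ℝ // f ∈ A ∧ (∀ y, 0 ≤ f y) ∧ ∀ y, f y ≤ u y}
  obtain ⟨T, hTc, hT⟩ := exists_countable_forall_lt_of_lowerSemicontinuous
    (F := fun i : ι => ⇑(i : X →ᵇ ℝ)) fun i => i.1.continuous.lowerSemicontinuous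
  let zero : ι := ⟨0, hA.zero_mem, fun _ => le_rfl, hu0⟩
  obtain ⟨e, he⟩ := (hTc.insert zero).exists_eq_range (Set.insert_nonempty _ _)
  refine ⟨fun n => e n, fun n => (e n).2.1, fun n => (e n).2.2.1, fun n => (e n).2.2.2, ?_⟩
  intro x c hc
  obtain ⟨f, hfA, hf0, hfu, hcf⟩ := hA.exists_mem_le_lt_apply hu hu0 hc
  obtain ⟨i, hiT, hci⟩ := hT x c ⟨⟨f, hfA, hf0, hfu⟩, hcf⟩
  obtain ⟨n, rfl⟩ : i ∈ Set.range e := he ▸ Set.mem_insert_of_mem _ hiT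
  exact ⟨n, hci⟩

theorem exists_mem_forall_pos [HereditarilyLindelofSpace X] (hA : IsAcceptable A) :
    ∃ h ∈ A, ∀ x, 0 < h x := by
  obtain ⟨f, hfA, hf0, hf1, hfpos⟩ :=
    hA.exists_seq_le_forall_lt (u := fun _ => 1) lowerSemicontinuous_const fun _ => zero_le_one
  have hfn : ∀ n, ‖f n‖ ≤ 1 := fun n => (norm_le zero_le_one).2 fun y => by
    rw [Real.norm_eq_abs, abs_of_nonneg (hf0 n y)]
    exact hf1 n y
  have hnorm : ∀ n, ‖(2⁻¹ : ℝ) ^ n • f n‖ ≤ 2⁻¹ ^ n := fun n => by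
    rw [norm_smul, norm_pow, norm_inv, Real.norm_two]
    exact mul_le_of_le_one_right (by positivity) (hfn n)
  have hsum : Summable fun n => (2⁻¹ : ℝ) ^ n • f n :=
    Summable.of_norm_bounded (summable_geometric_of_lt_one (by norm_num) (by norm_num)) hnorm
  refine ⟨∑' n, (2⁻¹ : ℝ) ^ n • f n, hA.tsum_mem fun n => hA.smul_mem _ (hfA n), fun x => ?_⟩
  obtain ⟨n, hn⟩ := hfpos x 0 zero_lt_one
  rw [← evalCLM_apply ℝ x, (evalCLM ℝ x).map_tsum hsum]
  exact (hsum.mapL (evalCLM ℝ x)).tsum_pos (fun k => by simpa using hf0 k x) n (by simpa using hn)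

theorem exists_monotone_tendsto [HereditarilyLindelofSpace X] (hA : IsAcceptable A)
    {u : X → ℝ} (hu : LowerSemicontinuous u) (hu0 : ∀ x, 0 ≤ u x) :
    ∃ g : ℕ → X →ᵇ ℝ, (∀ k, g k ∈ A) ∧ (∀ k x, 0 ≤ g k x) ∧
      (∀ x, Monotone fun k => g k x) ∧ ∀ x, Tendsto (fun k => g k x) atTop (𝓝 (u x)) := by
  obtain ⟨f, hfA, hf0, hfu, hfsup⟩ := hA.exists_seq_le_forall_lt hu hu0
  refine ⟨partialSups f, hA.partialSups_mem hfA, ?_⟩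
  simp only [coe_partialSups, Pi.partialSups_apply]
  exact ⟨fun k x => (hf0 0 x).trans (le_partialSups_of_le (fun n => f n x) k.zero_le),
    fun x => partialSups_monotone _,
    fun x => tendsto_partialSups_of_forall_lt (fun n => hfu n x) (hfsup x)⟩

end IsAcceptable

theorem stmt1 {X : Type*} [TopologicalSpace X] [PolishSpace X]
    (A : Set (X →ᵇ ℝ)) (hA : IsAcceptable A) :
    (∃ h ∈ A, ∀ x, 0 < h x) ∧
    (∀ u : X → ℝ, LowerSemicontinuous u → (∀ x, 0 ≤ u x) →
      ∃ g : ℕ → X →ᵇ ℝ, (∀ k, g k ∈ A) ∧ (∀ k x, 0 ≤ g k x) ∧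
        (∀ x, Monotone fun k => g k x) ∧ ∀ x, Tendsto (fun k => g k x) atTop (𝓝 (u x))) :=
  ⟨hA.exists_mem_forall_pos, fun _ hu hu0 => hA.exists_monotone_tendsto hu hu0⟩

end AMPaper

end
end

section
/- Let p ≥ 1 and let K ⊆ M^+(X) be τ_A-compact. Then M_p(K) = M_{p,c}^A(K). -/
/-! An admissible lower semicontinuous `ρ` is the pointwise supremum of the nonnegative elements
of `A` below it: by (A2), a multiple of a separating function sits below `ρ` and reaches any
value `b < ρ x` at `x`. Since `X` is second countable and `A` is a lattice, `ρ` is then the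
increasing limit of a sequence `hₙ` of such functions. By monotone convergence
`∫ hₙ dμ ↑ ∫ ρ dμ ≥ 1` for every `μ ∈ K`, and `μ ↦ ∫ hₙ dμ` is `τ_A`-continuous, so compactness
of `K` yields a single `n` with `∫ hₙ dμ > 1/c` on all of `K`, for a given `c > 1`. Then `c hₙ` is
admissible, lies in `A`, and has energy at most `c^p ∫ ρ^p dm`; let `c ↓ 1`. -/

open MeasureTheory Filter Topology BoundedContinuousFunction ENNReal NNReal

noncomputable section

namespace AMPaper

variable (X : Type*) [TopologicalSpace X] [MeasurableSpace X]

variable {X}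

section Topology

variable {α : Type*} [TopologicalSpace α]

theorem _root_.IsCompact.exists_forall_lt_of_monotone {K : Set α} (hK : IsCompact K)
    {F : ℕ → α → ℝ} (hF : ∀ n, Continuous (F n)) (hmono : Monotone F) {t : ℝ}
    (ht : ∀ a ∈ K, ∃ n, t < F n a) : ∃ N, ∀ a ∈ K, t < F N a :=
  hK.elim_directed_cover (fun n => {a | t < F n a})
    (fun n => isOpen_lt continuous_const (hF n))
    (fun a ha => Set.mem_iUnion.2 (ht a ha))
    (Monotone.directed_le fun _ _ hmn _ ha => ha.trans_le (hmono hmn _))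

def minorants (A : Set (α →ᵇ ℝ)) (ρ : α → ℝ≥0∞) : Set (α →ᵇ ℝ) :=
  {h | h ∈ A ∧ 0 ≤ h ∧ ∀ x, ENNReal.ofReal (h x) ≤ ρ x}

variable {A : Set (α →ᵇ ℝ)} {ρ : α → ℝ≥0∞}

theorem IsClosedSublattice.supClosed_minorants (hA : IsClosedSublattice A) :
    SupClosed (minorants A ρ) := by
  rintro f ⟨hfA, hf0, hfρ⟩ g ⟨hgA, -, hgρ⟩
  refine ⟨hA.sup_mem hfA hgA fun x => rfl, hf0.trans le_sup_left, fun x => ?_⟩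
  simpa only [coe_sup, Pi.sup_apply, ENNReal.ofReal_max] using max_le (hfρ x) (hgρ x)

theorem IsAcceptable.exists_mem_minorants_apply_eq (hA : IsAcceptable A)
    (hρ : LowerSemicontinuous ρ) {x : α} {b : ℝ≥0∞} (hb : b < ρ x) :
    ∃ h ∈ minorants A ρ, ENNReal.ofReal (h x) = b := by
  obtain ⟨g, hgA, hg0, hg1, hgx, hgF⟩ := hA.sep _ (hρ.isClosed_preimage b) x (not_le.2 hb)
  have hb_top : b ≠ ∞ := hb.ne_top
  refine ⟨b.toReal • g, ⟨hA.smul_mem _ hgA, fun y => mul_nonneg toReal_nonneg (hg0 y),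
    fun y => ?_⟩, by simp [hgx, hb_top]⟩
  by_cases hy : ρ y ≤ b
  · simp [hgF y hy]
  · calc ENNReal.ofReal ((b.toReal • g) y) ≤ ENNReal.ofReal b.toReal :=
          ENNReal.ofReal_le_ofReal (mul_le_of_le_one_right toReal_nonneg (hg1 y))
      _ ≤ ρ y := by rw [ENNReal.ofReal_toReal hb_top]; exact (not_le.1 hy).le

theorem IsAcceptable.isLUB_minorants (hA : IsAcceptable A) (hρ : LowerSemicontinuous ρ) :
    IsLUB ((fun h x => ENNReal.ofReal (h x)) '' minorants A ρ) ρ := by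
  refine ⟨?_, fun g hg x => le_of_forall_lt_imp_le_of_dense fun b hb => ?_⟩
  · rintro _ ⟨h, ⟨-, -, hhρ⟩, rfl⟩
    exact hhρ
  · obtain ⟨h, hh, rfl⟩ := hA.exists_mem_minorants_apply_eq hρ hb
    exact hg ⟨h, hh, rfl⟩ x

theorem IsAcceptable.exists_monotone_minorants_iSup_eq [SecondCountableTopology α]
    (hA : IsAcceptable A) (hρ : LowerSemicontinuous ρ) :
    ∃ H : ℕ → α →ᵇ ℝ, Monotone H ∧ (∀ n, H n ∈ minorants A ρ) ∧
      ∀ x, ⨆ n, ENNReal.ofReal (H n x) = ρ x := by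
  set Φ : (α →ᵇ ℝ) → α → ℝ≥0∞ := fun h x => ENNReal.ofReal (h x)
  have hlub := hA.isLUB_minorants hρ
  obtain ⟨𝓕, h𝓕_sub, h𝓕_count, h𝓕_lub⟩ := exists_countable_lowerSemicontinuous_isLUB
    (by
      rintro _ ⟨h, -, rfl⟩
      exact (ENNReal.continuous_ofReal.comp h.continuous).lowerSemicontinuous)
    hlub
  have h0 : Φ 0 ∈ Φ '' minorants A ρ := ⟨0, ⟨hA.zero_mem, le_rfl, fun x => by simp⟩, rfl⟩
  obtain ⟨f, hf⟩ := (h𝓕_count.insert (Φ 0)).exists_eq_range (Set.insert_nonempty _ _)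
  choose H hH hHf using fun n => Set.insert_subset h0 h𝓕_sub (hf ▸ Set.mem_range_self n)
  have hf_lub : IsLUB (Set.range f) ρ := by
    rw [← hf, ← sup_eq_right.2 (hlub.1 h0)]
    exact h𝓕_lub.insert _
  have hmem : ∀ n, partialSups H n ∈ minorants A ρ := fun n =>
    hA.supClosed_minorants.finsetSup'_mem Finset.nonempty_Iic fun i _ => hH i
  refine ⟨partialSups H, (partialSups H).monotone, hmem, fun x => ?_⟩
  refine le_antisymm (iSup_le fun n => (hmem n).2.2 x) ?_
  have hfx : IsLUB (Set.range fun n => f n x) (ρ x) := by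
    rw [← Function.comp_def (Function.eval x), Set.range_comp]
    exact isLUB_pi.1 hf_lub x
  rw [← hfx.iSup_eq]
  exact iSup_mono fun n => hHf n ▸ ENNReal.ofReal_le_ofReal (le_partialSups H n x)

end Topology

theorem le_of_forall_one_lt_le_ofReal_rpow_mul {a b : ℝ≥0∞} {p : ℝ}
    (h : ∀ c : ℝ, 1 < c → a ≤ ENNReal.ofReal c ^ p * b) : a ≤ b := by
  rcases eq_or_ne b ∞ with rfl | hb
  · exact le_top
  have hcont : Continuous fun c : ℝ => ENNReal.ofReal c ^ p * b :=
    (ENNReal.continuous_mul_const hb).comp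
      (ENNReal.continuous_rpow_const.comp ENNReal.continuous_ofReal)
  have hlim : Tendsto (fun c : ℝ => ENNReal.ofReal c ^ p * b) (𝓝[>] 1) (𝓝 b) := by
    simpa using (hcont.tendsto 1).mono_left nhdsWithin_le_nhds
  exact ge_of_tendsto hlim (eventually_nhdsWithin_of_forall h)

theorem mmod_le_mcMod (p : ℝ) (A : Set (X →ᵇ ℝ)) (m : Measure X) (E : Set (FiniteMeasure X)) :
    Mmod p m E ≤ McMod p A m E :=
  le_iInf₂ fun g hg => iInf₂_le (fun x => ENNReal.ofReal (g x))
    ⟨(ENNReal.continuous_ofReal.comp g.continuous).lowerSemicontinuous, hg.2.2⟩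

section Measure

variable {A : Set (X →ᵇ ℝ)} {K : Set (FiniteMeasure X)} {ρ : X → ℝ≥0∞}

theorem continuous_integral_tauA {g : X →ᵇ ℝ} (hg : g ∈ A) :
    Continuous[tauA X A, _] fun μ : FiniteMeasure X => ∫ x, g x ∂(μ : Measure X) :=
  continuous_iInf_dom (i := g) (continuous_iInf_dom (i := hg) continuous_induced_dom)

theorem exists_minorant_forall_lt_integral [SecondCountableTopology X] [OpensMeasurableSpace X]
    (hA : IsAcceptable A) (hK : @IsCompact _ (tauA X A) K) (hρ : AdmissibleFun ρ K)
    {t : ℝ} (ht : t < 1) : ∃ h ∈ minorants A ρ, ∀ μ ∈ K, t < ∫ x, h x ∂(μ : Measure X) := by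
  obtain ⟨H, hHmono, hH, hHρ⟩ := hA.exists_monotone_minorants_iSup_eq hρ.1
  have hHK : ∀ μ ∈ K, ∃ n, t < ∫ x, H n x ∂(μ : Measure X) := by
    intro μ hμ
    have hlt : ENNReal.ofReal t < ⨆ n, ENNReal.ofReal (∫ x, H n x ∂(μ : Measure X)) :=
      calc ENNReal.ofReal t < 1 := ENNReal.ofReal_lt_one.2 ht
        _ ≤ ∫⁻ x, ρ x ∂(μ : Measure X) := hρ.2 μ hμ
        _ = ⨆ n, ∫⁻ x, ENNReal.ofReal (H n x) ∂(μ : Measure X) := by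
          simp_rw [← hHρ]
          exact lintegral_iSup (fun n => ENNReal.measurable_ofReal.comp (H n).continuous.measurable)
            fun i j hij x => ENNReal.ofReal_le_ofReal (hHmono hij x)
        _ = _ := by
          simp_rw [ofReal_integral_eq_lintegral_ofReal ((H _).integrable _)
            (ae_of_all _ (hH _).2.1)]
    obtain ⟨n, hn⟩ := lt_iSup_iff.1 hlt
    exact ⟨n, (ENNReal.ofReal_lt_ofReal_iff'.1 hn).1⟩
  let := tauA X A
  obtain ⟨N, hN⟩ := hK.exists_forall_lt_of_monotone (fun n => continuous_integral_tauA (hH n).1)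
    (fun i j hij μ => integral_mono ((H i).integrable _) ((H j).integrable _) (hHmono hij)) hHK
  exact ⟨H N, hH N, hN⟩

theorem mcMod_le_ofReal_rpow_mul_lintegral [SecondCountableTopology X] [OpensMeasurableSpace X]
    (m : Measure X) (hA : IsAcceptable A) {p : ℝ} (hp : 0 ≤ p) (hK : @IsCompact _ (tauA X A) K)
    (hρ : AdmissibleFun ρ K) {c : ℝ} (hc : 1 < c) :
    McMod p A m K ≤ ENNReal.ofReal c ^ p * ∫⁻ x, ρ x ^ p ∂m := by
  have hc0 : 0 ≤ c := zero_le_one.trans hc.le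
  obtain ⟨h, ⟨hhA, hh0, hhρ⟩, hhK⟩ :=
    exists_minorant_forall_lt_integral hA hK hρ (inv_lt_one_of_one_lt₀ hc)
  have hch0 : ∀ x, 0 ≤ (c • h) x := fun x => mul_nonneg hc0 (hh0 x)
  have hch : ∀ x, ENNReal.ofReal ((c • h) x) = ENNReal.ofReal c * ENNReal.ofReal (h x) :=
    fun x => ENNReal.ofReal_mul hc0
  refine (iInf₂_le (c • h) ⟨hA.smul_mem c hhA, hch0, fun μ hμ => ?_⟩).trans ?_
  · calc ∫⁻ x, ENNReal.ofReal ((c • h) x) ^ p ∂m ≤ ∫⁻ x, (ENNReal.ofReal c * ρ x) ^ p ∂m :=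
          lintegral_mono fun x => by rw [hch]; gcongr; exact hhρ x
      _ = ENNReal.ofReal c ^ p * ∫⁻ x, ρ x ^ p ∂m := by
          simp_rw [ENNReal.mul_rpow_of_nonneg _ _ hp]
          exact lintegral_const_mul' _ _ (ENNReal.rpow_ne_top_of_nonneg hp ENNReal.ofReal_ne_top)
  · rw [← ofReal_integral_eq_lintegral_ofReal ((c • h).integrable _) (ae_of_all _ hch0),
      ENNReal.one_le_ofReal]
    calc 1 = c * c⁻¹ := (mul_inv_cancel₀ (zero_lt_one.trans hc).ne').symm
      _ ≤ c * ∫ x, h x ∂(μ : Measure X) := mul_le_mul_of_nonneg_left (hhK μ hμ).le hc0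
      _ = ∫ x, (c • h) x ∂(μ : Measure X) := (integral_const_mul c _).symm

end Measure

theorem stmt7_general {X : Type*} [TopologicalSpace X] [PolishSpace X] [MeasurableSpace X] [BorelSpace X]
    (m : Measure X)
    (A : Set (X →ᵇ ℝ)) (hA : IsAcceptable A)
    (p : ℝ) (hp : 1 ≤ p) (K : Set (FiniteMeasure X)) (hK : @IsCompact _ (tauA X A) K) :
    Mmod p m K = McMod p A m K :=
  le_antisymm (mmod_le_mcMod p A m K) <| le_iInf₂ fun _ hρ =>
    le_of_forall_one_lt_le_ofReal_rpow_mul fun _ hc =>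
      mcMod_le_ofReal_rpow_mul_lintegral m hA (zero_le_one.trans hp) hK hρ hc

theorem stmt7 {X : Type*} [TopologicalSpace X] [PolishSpace X] [MeasurableSpace X] [BorelSpace X]
    (m : Measure X) [IsFiniteMeasureOnCompacts m] [m.InnerRegular]
    (A : Set (X →ᵇ ℝ)) (hA : IsAcceptable A)
    (p : ℝ) (hp : 1 ≤ p) (K : Set (FiniteMeasure X)) (hK : @IsCompact _ (tauA X A) K) :
    Mmod p m K = McMod p A m K :=
  stmt7_general m A hA p hp K hK

end AMPaper

end
end

section
/- Let X = ℝ with m the Lebesgue measure. For k ∈ ℕ let Γ_k = { m restricted to [0,r] : r ∈ [2^{-k},1] } and Γ = ∪_k Γ_k = { m restricted to [0,r] : r ∈ (0,1] }. Then each Γ_k is τ_b-compact, AM(Γ) ≤ lim_{k→∞} M_1(Γ_k) ≤ 1, but M_1(Γ) = ∞. In particular AM(Γ) < M_1(Γ), and Γ is an F_σ set that is not M_1-capacitable (i.e., M_1(Γ) > sup{ M_1(K) : K ⊆ Γ, K τ_b-compact }). -/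
/-!
The test function `ρ_a = a⁻¹ · 1_{(0,a)}` has `∫ ρ_a dm = 1` and `∫ ρ_a dμ = 1` for every
`μ = m|_{[0,r]}` with `r ≥ a`; it is admissible for `Γ_k` when `a = 2^{-k}`, and the sequence
`(ρ_{2^{-j}})_j` is admissible for all of `Γ`, so `AM(Γ) ≤ 1`. A single `ρ ∈ L¹(m)`, however,
has `∫_{[0,r]} ρ dm → 0` as `r → 0`, so it cannot be admissible for `Γ` and `M_1(Γ) = ∞`.
Since `τ_b` is the usual weak topology and the total mass `μ(ℝ) = r` of `m|_{[0,r]}` is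
continuous in it, a compact `K ⊆ Γ` stays away from `r = 0`, lies in some `Γ_k`, and
has `M_1(K) ≤ 1`.
-/

open MeasureTheory Filter Topology BoundedContinuousFunction ENNReal NNReal

noncomputable section

namespace AMPaper

variable (X : Type*) [TopologicalSpace X] [MeasurableSpace X]

variable {X}

open Set

theorem taub_eq_instTopologicalSpace [OpensMeasurableSpace X] :
    taub X = (inferInstance : TopologicalSpace (FiniteMeasure X)) := by
  refine le_antisymm ?_ (le_iInf fun g => ?_)
  · rw [← continuous_id_iff_le,
      @FiniteMeasure.continuous_iff_forall_continuous_integral _ _ _ _ _ (taub X) id]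
    exact fun g => continuous_iff_le_induced.mpr (iInf_le _ g)
  · exact continuous_iff_le_induced.mp
      (FiniteMeasure.continuous_integral_boundedContinuousFunction g)

theorem Mmod_le_lintegral {p : ℝ} {m : Measure X} {E : Set (FiniteMeasure X)} {ρ : X → ℝ≥0∞}
    (hρ : AdmissibleFun ρ E) : Mmod p m E ≤ ∫⁻ x, ρ x ^ p ∂m :=
  iInf₂_le ρ hρ

theorem Mmod_mono {p : ℝ} {m : Measure X} {E F : Set (FiniteMeasure X)} (h : E ⊆ F) :
    Mmod p m E ≤ Mmod p m F :=
  le_iInf₂ fun _ hρ => Mmod_le_lintegral ⟨hρ.1, fun μ hμ => hρ.2 μ (h hμ)⟩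

theorem AMmod_le_liminf {p : ℝ} {m : Measure X} {E : Set (FiniteMeasure X)}
    {ρ : ℕ → X → ℝ≥0∞} (hρ : AdmissibleSeq ρ E) :
    AMmod p m E ≤ liminf (fun j => ∫⁻ x, ρ j x ^ p ∂m) atTop :=
  iInf₂_le ρ hρ

theorem one_le_Mmod_one {m : Measure X} {E : Set (FiniteMeasure X)} {μ : FiniteMeasure X}
    (hμE : μ ∈ E) (hμm : (μ : Measure X) ≤ m) : 1 ≤ Mmod 1 m E :=
  le_iInf₂ fun ρ hρ => by
    simpa only [ENNReal.rpow_one] using (hρ.2 μ hμE).trans (lintegral_mono' hμm le_rfl)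

theorem Mmod_one_eq_top {ι : Type*} {l : Filter ι} [l.NeBot] {m : Measure X}
    {E : Set (FiniteMeasure X)} {μ : ι → FiniteMeasure X} {s : ι → Set X} (hμE : ∀ i, μ i ∈ E)
    (hμs : ∀ i, (μ i : Measure X) = m.restrict (s i)) (hs : Tendsto (m ∘ s) l (𝓝 0)) :
    Mmod 1 m E = ∞ := by
  refine top_unique (le_iInf₂ fun ρ hρ => top_le_iff.mpr ?_)
  by_contra hfin
  simp only [ENNReal.rpow_one] at hfin
  have hlim := tendsto_setLIntegral_zero hfin hs
  have hge : ∀ i, 1 ≤ ∫⁻ x in s i, ρ x ∂m := fun i => hμs i ▸ hρ.2 _ (hμE i)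
  exact absurd (ge_of_tendsto' hlim hge) (by norm_num)

def restrictIcc (r : ℝ) : FiniteMeasure ℝ :=
  ⟨volume.restrict (Icc 0 r), isFiniteMeasure_restrict.mpr measure_Icc_lt_top.ne⟩

theorem coe_restrictIcc (r : ℝ) :
    (restrictIcc r : Measure ℝ) = volume.restrict (Icc 0 r) := rfl

theorem setOf_coe_eq_restrict_eq_image (S : Set ℝ) :
    {μ : FiniteMeasure ℝ | ∃ r ∈ S, (μ : Measure ℝ) = volume.restrict (Icc 0 r)} =
      restrictIcc '' S := by
  ext μ
  refine exists_congr fun r => and_congr_right fun _ => ?_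
  rw [eq_comm, ← FiniteMeasure.toMeasure_injective.eq_iff, coe_restrictIcc]

theorem mass_restrictIcc {r : ℝ} (hr : 0 ≤ r) : ((restrictIcc r).mass : ℝ) = r := by
  rw [← ENNReal.coe_toReal, FiniteMeasure.ennreal_mass, coe_restrictIcc,
    Measure.restrict_apply_univ, Real.volume_Icc, sub_zero, ENNReal.toReal_ofReal hr]

theorem continuous_restrictIcc : Continuous restrictIcc := by
  refine FiniteMeasure.continuous_iff_forall_continuous_integral.mpr fun g => ?_
  have hprim : (fun r => ∫ x, g x ∂(restrictIcc r : Measure ℝ))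
      = fun r => ∫ t in (0:ℝ)..max r 0, g t := by
    funext r
    rcases le_total 0 r with hr | hr
    · rw [max_eq_left hr, coe_restrictIcc, intervalIntegral.integral_of_le hr,
        integral_Icc_eq_integral_Ioc]
    · rw [max_eq_right hr, intervalIntegral.integral_same, coe_restrictIcc]
      rcases hr.lt_or_eq with hr | rfl
      · rw [Icc_eq_empty hr.not_ge, Measure.restrict_empty, integral_zero_measure]
      · rw [Icc_self, Measure.restrict_singleton, Real.volume_singleton, zero_smul,
          integral_zero_measure]
  rw [hprim]
  exact (intervalIntegral.continuous_primitive (fun a b => g.continuous.intervalIntegrable a b)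
    0).comp (continuous_id.max continuous_const)

theorem exists_subset_image_Icc_of_isCompact {K : Set (FiniteMeasure ℝ)} (hK : IsCompact K)
    (hKS : K ⊆ restrictIcc '' Ioc 0 1) : ∃ k : ℕ, K ⊆ restrictIcc '' Icc ((2:ℝ)⁻¹ ^ k) 1 := by
  let U : ℕ → Set (FiniteMeasure ℝ) := fun k => {μ | (2:ℝ)⁻¹ ^ k < μ.mass}
  have hU_open : ∀ k, IsOpen (U k) := fun k =>
    isOpen_lt continuous_const (NNReal.continuous_coe.comp FiniteMeasure.continuous_mass)
  have hU_mono : Monotone U := fun i j hij μ hμ =>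
    (pow_le_pow_of_le_one (by norm_num : (0:ℝ) ≤ 2⁻¹) (by norm_num) hij).trans_lt hμ
  have hKU : K ⊆ ⋃ k, U k := by
    intro μ hμ
    obtain ⟨r, hr, rfl⟩ := hKS hμ
    obtain ⟨k, hk⟩ := exists_pow_lt_of_lt_one hr.1 (by norm_num : (2:ℝ)⁻¹ < 1)
    exact mem_iUnion.mpr ⟨k, by simpa only [U, mem_ofPred_eq, mass_restrictIcc hr.1.le]⟩
  obtain ⟨k, hk⟩ := hK.elim_directed_cover U hU_open hKU hU_mono.directed_le
  refine ⟨k, fun μ hμ => ?_⟩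
  obtain ⟨r, hr, rfl⟩ := hKS hμ
  have hkr := hk hμ
  simp only [U, mem_ofPred_eq, mass_restrictIcc hr.1.le] at hkr
  exact ⟨r, ⟨hkr.le, hr.2⟩, rfl⟩

def bump (a : ℝ) : ℝ → ℝ≥0∞ :=
  (Ioo 0 a).indicator fun _ => (ENNReal.ofReal a)⁻¹

theorem lowerSemicontinuous_bump (a : ℝ) : LowerSemicontinuous (bump a) :=
  isOpen_Ioo.lowerSemicontinuous_indicator zero_le

theorem setLIntegral_bump {a : ℝ} (ha : 0 < a) {s : Set ℝ} (hs : Ioo 0 a ⊆ s) :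
    ∫⁻ x in s, bump a x = 1 := by
  rw [bump, lintegral_indicator measurableSet_Ioo, setLIntegral_const,
    Measure.restrict_apply measurableSet_Ioo, inter_eq_left.mpr hs, Real.volume_Ioo, sub_zero,
    ENNReal.inv_mul_cancel (ENNReal.ofReal_pos.mpr ha).ne' ENNReal.ofReal_ne_top]

theorem lintegral_bump {a : ℝ} (ha : 0 < a) : ∫⁻ x, bump a x = 1 := by
  simpa only [Measure.restrict_univ] using setLIntegral_bump ha (subset_univ _)

theorem lintegral_bump_restrictIcc {a r : ℝ} (ha : 0 < a) (har : a ≤ r) :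
    ∫⁻ x, bump a x ∂(restrictIcc r : Measure ℝ) = 1 :=
  setLIntegral_bump ha (Ioo_subset_Icc_self.trans (Icc_subset_Icc_right har))

theorem Mmod_image_le_one {a : ℝ} (ha : 0 < a) {S : Set ℝ} (hS : S ⊆ Ici a) :
    Mmod 1 volume (restrictIcc '' S) ≤ 1 := by
  have hadm : AdmissibleFun (bump a) (restrictIcc '' S) := by
    refine ⟨lowerSemicontinuous_bump a, ?_⟩
    rintro _ ⟨r, hr, rfl⟩
    exact (lintegral_bump_restrictIcc ha (hS hr)).ge
  simpa only [ENNReal.rpow_one, lintegral_bump ha]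
    using Mmod_le_lintegral (p := 1) (m := volume) hadm

theorem AMmod_image_le_one {S : Set ℝ} (hS : S ⊆ Ioi 0) :
    AMmod 1 volume (restrictIcc '' S) ≤ 1 := by
  have hpos : ∀ j : ℕ, (0:ℝ) < 2⁻¹ ^ j := fun j => by positivity
  have hadm : AdmissibleSeq (fun j => bump (2⁻¹ ^ j)) (restrictIcc '' S) := by
    refine ⟨fun j => lowerSemicontinuous_bump _, ?_⟩
    rintro _ ⟨r, hr, rfl⟩
    have hsmall : ∀ᶠ j in atTop, (2:ℝ)⁻¹ ^ j ≤ r :=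
      (_root_.tendsto_pow_atTop_nhds_zero_of_lt_one (by norm_num) (by norm_num)).eventually_le_const
        (hS hr)
    refine le_liminf_of_le (by isBoundedDefault) ?_
    filter_upwards [hsmall] with j hj
    exact (lintegral_bump_restrictIcc (hpos j) hj).ge
  simpa only [ENNReal.rpow_one, lintegral_bump (hpos _), liminf_const]
    using AMmod_le_liminf (p := 1) (m := volume) hadm

theorem Mmod_image_Ioc_eq_top : Mmod 1 volume (restrictIcc '' Ioc 0 1) = ∞ := by
  refine Mmod_one_eq_top (l := atTop) (s := fun k : ℕ => Icc 0 ((2:ℝ)⁻¹ ^ k))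
    (fun k => mem_image_of_mem _ ⟨by positivity, pow_le_one₀ (by norm_num) (by norm_num)⟩)
    (fun k => coe_restrictIcc _) ?_
  simp only [Function.comp_def, Real.volume_Icc, sub_zero]
  simpa only [ENNReal.ofReal_zero] using ENNReal.tendsto_ofReal
    (_root_.tendsto_pow_atTop_nhds_zero_of_lt_one (by norm_num) (by norm_num))

theorem iUnion_Icc_inv_two_pow : ⋃ k : ℕ, Icc ((2:ℝ)⁻¹ ^ k) 1 = Ioc 0 1 := by
  refine subset_antisymm (iUnion_subset fun k x hx => ⟨hx.1.trans_lt' (by positivity), hx.2⟩)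
    fun x hx => ?_
  obtain ⟨k, hk⟩ := exists_pow_lt_of_lt_one hx.1 (by norm_num : (2:ℝ)⁻¹ < 1)
  exact mem_iUnion.mpr ⟨k, hk.le, hx.2⟩

theorem stmt15 :
    (∀ k : ℕ, @IsCompact _ (taub ℝ)
      {μ : FiniteMeasure ℝ | ∃ r ∈ Set.Icc ((2:ℝ)⁻¹ ^ k) 1,
        (μ : Measure ℝ) = volume.restrict (Set.Icc 0 r)}) ∧
    (⋃ k : ℕ, {μ : FiniteMeasure ℝ | ∃ r ∈ Set.Icc ((2:ℝ)⁻¹ ^ k) 1,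
        (μ : Measure ℝ) = volume.restrict (Set.Icc 0 r)}) =
      {μ : FiniteMeasure ℝ | ∃ r ∈ Set.Ioc (0:ℝ) 1,
        (μ : Measure ℝ) = volume.restrict (Set.Icc 0 r)} ∧
    AMmod 1 (volume : Measure ℝ)
        {μ : FiniteMeasure ℝ | ∃ r ∈ Set.Ioc (0:ℝ) 1,
          (μ : Measure ℝ) = volume.restrict (Set.Icc 0 r)} ≤
      (⨆ k : ℕ, Mmod 1 (volume : Measure ℝ)
        {μ : FiniteMeasure ℝ | ∃ r ∈ Set.Icc ((2:ℝ)⁻¹ ^ k) 1,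
          (μ : Measure ℝ) = volume.restrict (Set.Icc 0 r)}) ∧
    (⨆ k : ℕ, Mmod 1 (volume : Measure ℝ)
        {μ : FiniteMeasure ℝ | ∃ r ∈ Set.Icc ((2:ℝ)⁻¹ ^ k) 1,
          (μ : Measure ℝ) = volume.restrict (Set.Icc 0 r)}) ≤ 1 ∧
    Mmod 1 (volume : Measure ℝ)
        {μ : FiniteMeasure ℝ | ∃ r ∈ Set.Ioc (0:ℝ) 1,
          (μ : Measure ℝ) = volume.restrict (Set.Icc 0 r)} = ∞ ∧
    AMmod 1 (volume : Measure ℝ)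
        {μ : FiniteMeasure ℝ | ∃ r ∈ Set.Ioc (0:ℝ) 1,
          (μ : Measure ℝ) = volume.restrict (Set.Icc 0 r)} <
      Mmod 1 (volume : Measure ℝ)
        {μ : FiniteMeasure ℝ | ∃ r ∈ Set.Ioc (0:ℝ) 1,
          (μ : Measure ℝ) = volume.restrict (Set.Icc 0 r)} ∧
    (∃ C : ℕ → Set (FiniteMeasure ℝ), (∀ n, @IsClosed _ (taub ℝ) (C n)) ∧
      {μ : FiniteMeasure ℝ | ∃ r ∈ Set.Ioc (0:ℝ) 1,
        (μ : Measure ℝ) = volume.restrict (Set.Icc 0 r)} = ⋃ n, C n) ∧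
    (⨆ (K : Set (FiniteMeasure ℝ)) (_ : @IsCompact _ (taub ℝ) K ∧
        K ⊆ {μ : FiniteMeasure ℝ | ∃ r ∈ Set.Ioc (0:ℝ) 1,
          (μ : Measure ℝ) = volume.restrict (Set.Icc 0 r)}),
      Mmod 1 (volume : Measure ℝ) K) <
      Mmod 1 (volume : Measure ℝ)
        {μ : FiniteMeasure ℝ | ∃ r ∈ Set.Ioc (0:ℝ) 1,
          (μ : Measure ℝ) = volume.restrict (Set.Icc 0 r)} := by
  rw [taub_eq_instTopologicalSpace]
  simp only [setOf_coe_eq_restrict_eq_image]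
  have hΓ_compact : ∀ k : ℕ, IsCompact (restrictIcc '' Icc ((2:ℝ)⁻¹ ^ k) 1) :=
    fun k => isCompact_Icc.image continuous_restrictIcc
  have hΓ_iUnion : ⋃ k : ℕ, restrictIcc '' Icc ((2:ℝ)⁻¹ ^ k) 1 = restrictIcc '' Ioc 0 1 := by
    rw [← image_iUnion, iUnion_Icc_inv_two_pow]
  have hΓ_le_one : ∀ k : ℕ, Mmod 1 volume (restrictIcc '' Icc ((2:ℝ)⁻¹ ^ k) 1) ≤ 1 :=
    fun k => Mmod_image_le_one (by positivity) fun _ hr => hr.1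
  have hAM : AMmod 1 volume (restrictIcc '' Ioc 0 1) ≤ 1 :=
    AMmod_image_le_one fun _ hr => hr.1
  have hone_le : 1 ≤ ⨆ k : ℕ, Mmod 1 volume (restrictIcc '' Icc ((2:ℝ)⁻¹ ^ k) 1) :=
    le_iSup_of_le 0 (one_le_Mmod_one (mem_image_of_mem _ ⟨by norm_num, le_rfl⟩)
      (by rw [coe_restrictIcc]; exact Measure.restrict_le_self))
  have hM_top := Mmod_image_Ioc_eq_top
  refine ⟨hΓ_compact, hΓ_iUnion, hAM.trans hone_le, iSup_le hΓ_le_one, hM_top,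
    hM_top ▸ hAM.trans_lt one_lt_top,
    ⟨_, fun k => (hΓ_compact k).isClosed, hΓ_iUnion.symm⟩, hM_top ▸ ?_⟩
  refine (iSup₂_le fun K hK => ?_).trans_lt one_lt_top
  obtain ⟨k, hk⟩ := exists_subset_image_Icc_of_isCompact hK.1 hK.2
  exact (Mmod_mono hk).trans (hΓ_le_one k)

end AMPaper

end
end
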